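/- arXiv:2505.09167 — 2 statements merged into one kernel-verified Lean document; each statement's English description precedes it below -/
import Mathlib

section
/- In the multiclass weighted majority algorithm with n experts, where each expert predicting incorrectly on a mistake round has its weight halved, the total number of mistakes made by the algorithm is at most 3(L + log₂ n), where L is the number of mistakes made by the best expert. -/
open Finset

/-- Multiclass weighted majority mistake bound: the algorithm makes at most
`3 * (L + log₂ n)` mistakes, where `L` is the number of mistakes of any
(in particular the best) expert. -/
theorem weighted_majority_mistake_bound {Y : Type*} [DecidableEq Y]
    (n T : ℕ) (hn : 1 ≤ n)
    (E : Fin T → Fin n → Y)  -- expert predictions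
    (y : Fin T → Y)          -- true labels
    (pred : Fin T → Y)       -- algorithm's predictions
    (w : ℕ → Fin n → ℝ)      -- weights at the start of each round
    (h0 : ∀ i, w 0 i = 1)
    (hpred : ∀ t : Fin T, ∀ z : Y,
      ∑ i ∈ univ.filter (fun i => E t i = z), w t i
        ≤ ∑ i ∈ univ.filter (fun i => E t i = pred t), w t i)
    (hupd : ∀ t : Fin T, ∀ i,
      w (t + 1) i = if pred t ≠ y t ∧ E t i ≠ y t then w t i / 2 else w t i)
    (i : Fin n) :
    ((univ.filter (fun t : Fin T => pred t ≠ y t)).card : ℝ)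
      ≤ 3 * (((univ.filter (fun t : Fin T => E t i ≠ y t)).card : ℝ)
              + Real.logb 2 n) := by
  classical
  -- positivity of weights
  have hpos : ∀ t, t ≤ T → ∀ j, 0 < w t j := by
    intro t
    induction t with
    | zero => intro _ j; simp [h0]
    | succ t ih =>
      intro ht j
      have ht' : t < T := ht
      have h := hupd ⟨t, ht'⟩ j
      simp only [Fin.val_mk] at h
      rw [h]
      split
      · exact div_pos (ih ht'.le j) two_pos
      · exact ih ht'.le j
  set P : ℕ → Prop := fun s => ∃ h : s < T, pred ⟨s, h⟩ ≠ y ⟨s, h⟩ with hP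
  set Q : ℕ → Prop := fun s =>
    ∃ h : s < T, pred ⟨s, h⟩ ≠ y ⟨s, h⟩ ∧ E ⟨s, h⟩ i ≠ y ⟨s, h⟩ with hQ
  -- weight of expert i
  have hwi : ∀ t, t ≤ T →
      w t i = (1/2 : ℝ) ^ ((Finset.range t).filter Q).card := by
    intro t
    induction t with
    | zero => intro _; simp [h0]
    | succ t ih =>
      intro ht
      have ht' : t < T := ht
      have h := hupd ⟨t, ht'⟩ i
      simp only [Fin.val_mk] at h
      rw [h, Finset.range_add_one, Finset.filter_insert]
      by_cases hq : Q t
      · have hq' : pred ⟨t, ht'⟩ ≠ y ⟨t, ht'⟩ ∧ E ⟨t, ht'⟩ i ≠ y ⟨t, ht'⟩ := by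
          obtain ⟨h1, h2⟩ := hq; exact h2
        rw [if_pos hq', if_pos hq, Finset.card_insert_of_notMem (by simp),
          ih ht'.le]
        ring
      · have hq' : ¬ (pred ⟨t, ht'⟩ ≠ y ⟨t, ht'⟩ ∧ E ⟨t, ht'⟩ i ≠ y ⟨t, ht'⟩) := by
          intro hc; exact hq ⟨ht', hc⟩
        rw [if_neg hq', if_neg hq, ih ht'.le]
  -- total weight bound
  have hW : ∀ t, t ≤ T →
      ∑ j, w t j ≤ (n : ℝ) * (3/4 : ℝ) ^ ((Finset.range t).filter P).card := by
    intro t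
    induction t with
    | zero => intro _; simp [h0]
    | succ t ih =>
      intro ht
      have ht' : t < T := ht
      set t' : Fin T := ⟨t, ht'⟩ with ht''
      have hstep : ∀ j, w (t + 1) j =
          if pred t' ≠ y t' ∧ E t' j ≠ y t' then w t j / 2 else w t j := by
        intro j
        have h := hupd t' j
        simpa using h
      rw [Finset.range_add_one, Finset.filter_insert]
      by_cases hp : P t
      · have hp' : pred t' ≠ y t' := by obtain ⟨h1, h2⟩ := hp; exact h2
        rw [if_pos hp, Finset.card_insert_of_notMem (by simp)]
        -- split sum into correct and wrong experts
        have hsplit : ∑ j, w (t+1) j =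
            (∑ j ∈ univ.filter (fun j => E t' j = y t'), w t j)
            + (∑ j ∈ univ.filter (fun j => ¬ E t' j = y t'), w t j / 2) := by
          rw [← Finset.sum_filter_add_sum_filter_not univ (fun j => E t' j = y t')]
          congr 1
          · apply Finset.sum_congr rfl
            intro j hj
            simp only [Finset.mem_filter] at hj
            rw [hstep j, if_neg (by push_neg; intro _; simpa using hj.2)]
          · apply Finset.sum_congr rfl
            intro j hj
            simp only [Finset.mem_filter] at hj
            rw [hstep j, if_pos ⟨hp', hj.2⟩]
        set C := ∑ j ∈ univ.filter (fun j => E t' j = y t'), w t j with hC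
        set Wr := ∑ j ∈ univ.filter (fun j => ¬ E t' j = y t'), w t j with hWr
        have htot : ∑ j, w t j = C + Wr :=
          (Finset.sum_filter_add_sum_filter_not univ _ _).symm
        have hCW : C ≤ Wr := by
          calc C ≤ ∑ j ∈ univ.filter (fun j => E t' j = pred t'), w t j :=
                hpred t' (y t')
          _ ≤ Wr := by
              apply Finset.sum_le_sum_of_subset_of_nonneg
              · intro j hj
                simp only [Finset.mem_filter] at hj ⊢
                exact ⟨hj.1, by rw [hj.2]; exact hp'⟩
              · intro j _ _
                exact (hpos t ht'.le j).le
        have h34 : ∑ j, w (t+1) j ≤ (3/4 : ℝ) * ∑ j, w t j := by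
          rw [hsplit, htot, ← Finset.sum_div, ← hWr]
          linarith
        calc ∑ j, w (t+1) j ≤ (3/4 : ℝ) * ∑ j, w t j := h34
        _ ≤ (3/4 : ℝ) * ((n : ℝ) * (3/4 : ℝ) ^ ((Finset.range t).filter P).card) := by
            have := ih ht'.le
            nlinarith
        _ = (n : ℝ) * (3/4 : ℝ) ^ (((Finset.range t).filter P).card + 1) := by ring
      · have hp' : ¬ pred t' ≠ y t' := fun hc => hp ⟨ht', hc⟩
        rw [if_neg hp]
        have : ∑ j, w (t+1) j = ∑ j, w t j := by
          apply Finset.sum_congr rfl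
          intro j _
          rw [hstep j, if_neg (by push_neg at hp' ⊢; intro hc; exact absurd hp' hc)]
        rw [this]
        exact ih ht'.le
  -- identify the cards
  have hMcard : ((Finset.range T).filter P).card
      = (univ.filter (fun t : Fin T => pred t ≠ y t)).card := by
    rw [show (Finset.range T).filter P
        = (univ.filter (fun t : Fin T => pred t ≠ y t)).image Fin.val by
      ext s
      simp only [Finset.mem_filter, Finset.mem_range, Finset.mem_image,
        Finset.mem_univ, true_and]
      constructor
      · rintro ⟨hs, h, hne⟩; exact ⟨⟨s, h⟩, hne, rfl⟩
      · rintro ⟨⟨s', hs'⟩, hne, rfl⟩; exact ⟨hs', hs', hne⟩]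
    exact Finset.card_image_of_injective _ Fin.val_injective
  have hKL : ((Finset.range T).filter Q).card
      ≤ (univ.filter (fun t : Fin T => E t i ≠ y t)).card := by
    rw [show (Finset.range T).filter Q
        = (univ.filter (fun t : Fin T => pred t ≠ y t ∧ E t i ≠ y t)).image Fin.val by
      ext s
      simp only [Finset.mem_filter, Finset.mem_range, Finset.mem_image,
        Finset.mem_univ, true_and]
      constructor
      · rintro ⟨hs, h, hne⟩; exact ⟨⟨s, h⟩, hne, rfl⟩
      · rintro ⟨⟨s', hs'⟩, hne, rfl⟩; exact ⟨hs', hs', hne⟩]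
    rw [Finset.card_image_of_injective _ Fin.val_injective]
    exact Finset.card_le_card (by
      intro t ht
      simp only [Finset.mem_filter] at ht ⊢
      exact ⟨ht.1, ht.2.2⟩)
  set M := (univ.filter (fun t : Fin T => pred t ≠ y t)).card with hMdef
  set L := (univ.filter (fun t : Fin T => E t i ≠ y t)).card with hLdef
  set K := ((Finset.range T).filter Q).card with hKdef
  -- key inequality: (1/2)^K ≤ n * (3/4)^M
  have hkey : (1/2 : ℝ) ^ K ≤ (n : ℝ) * (3/4 : ℝ) ^ M := by
    have h1 : w T i ≤ ∑ j, w T j :=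
      Finset.single_le_sum (fun j _ => (hpos T le_rfl j).le) (Finset.mem_univ i)
    rw [hwi T le_rfl] at h1
    have h2 := hW T le_rfl
    rw [hMcard] at h2
    exact h1.trans h2
  have hKL' : (1/2 : ℝ) ^ L ≤ (1/2 : ℝ) ^ K :=
    pow_le_pow_of_le_one (by norm_num) (by norm_num) hKL
  have hkey2 : (1/2 : ℝ) ^ L ≤ (n : ℝ) * (3/4 : ℝ) ^ M := hKL'.trans hkey
  -- turn into (4/3)^M ≤ n * 2^L
  have hn' : (1 : ℝ) ≤ (n : ℝ) := by exact_mod_cast hn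
  have h43 : (4/3 : ℝ) ^ M ≤ (n : ℝ) * 2 ^ L := by
    have h := mul_le_mul_of_nonneg_right hkey2
      (show (0:ℝ) ≤ (4/3:ℝ)^M * 2^L by positivity)
    have e1 : (1/2:ℝ)^L * 2^L = 1 := by rw [← mul_pow]; norm_num
    have e2 : (3/4:ℝ)^M * (4/3:ℝ)^M = 1 := by rw [← mul_pow]; norm_num
    calc (4/3:ℝ)^M = (1/2:ℝ)^L * ((4/3:ℝ)^M * 2^L) := by
          rw [show (1/2:ℝ)^L * ((4/3:ℝ)^M * 2^L)
              = ((1/2:ℝ)^L * 2^L) * (4/3:ℝ)^M by ring, e1, one_mul]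
    _ ≤ (n:ℝ) * (3/4:ℝ)^M * ((4/3:ℝ)^M * 2^L) := h
    _ = (n:ℝ) * 2^L := by
          rw [show (n:ℝ) * (3/4:ℝ)^M * ((4/3:ℝ)^M * 2^L)
              = (n:ℝ) * 2^L * ((3/4:ℝ)^M * (4/3:ℝ)^M) by ring, e2, mul_one]
  have h2M : (2 : ℝ) ^ M ≤ ((n : ℝ) * 2 ^ L) ^ 3 := by
    calc (2 : ℝ) ^ M ≤ ((4/3 : ℝ) ^ 3) ^ M := by
          apply pow_le_pow_left₀ (by norm_num)
          norm_num
    _ = ((4/3 : ℝ) ^ M) ^ 3 := by rw [← pow_mul, ← pow_mul, Nat.mul_comm]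
    _ ≤ ((n : ℝ) * 2 ^ L) ^ 3 := by
          apply pow_le_pow_left₀ (by positivity) h43
  have hnpos : (0:ℝ) < n := by exact_mod_cast hn
  have hlog : Real.logb 2 ((2:ℝ)^M) ≤ Real.logb 2 (((n:ℝ) * 2^L)^3) :=
    Real.logb_le_logb_of_le (by norm_num) (by positivity) h2M
  rw [Real.logb_pow, Real.logb_pow, Real.logb_self_eq_one (by norm_num),
    mul_one, Real.logb_mul (ne_of_gt hnpos) (by positivity),
    Real.logb_pow, Real.logb_self_eq_one (by norm_num), mul_one] at hlog
  calc (M:ℝ) ≤ 3 * (Real.logb 2 n + L) := hlog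
  _ = 3 * ((L:ℝ) + Real.logb 2 n) := by ring
end

section
/- For any dimension d ≥ 1 and any ε ≤ 1/(2√d), the totally-separable packing number satisfies TS(d, ε) ≥ (2·⌊1/(2ε√d)⌋)^d. -/
open scoped RealInnerProductSpace

/-- A `(d, ε)`-totally-separable packing (hyperplanes with bias allowed). -/
def IsTSPackingB (d : ℕ) (ε : ℝ) (P : Finset (EuclideanSpace ℝ (Fin d))) : Prop :=
  (∀ x ∈ P, ‖x‖ ≤ 1) ∧
  ∀ x ∈ P, ∀ y ∈ P, x ≠ y → ∃ (w : EuclideanSpace ℝ (Fin d)) (b : ℝ),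
    ‖w‖ = 1 ∧ ((0 ≤ ⟪w, x⟫ + b) ↔ ¬ (0 ≤ ⟪w, y⟫ + b)) ∧ ∀ z ∈ P, ε ≤ |⟪w, z⟫ + b|

/-- The `(d, ε)`-totally-separable packing number (with biases). -/
noncomputable def TSNumberB (d : ℕ) (ε : ℝ) : ℕ :=
  sSup {n | ∃ P, IsTSPackingB d ε P ∧ P.card = n}

/-!
Points of a `(d, ε)`-totally-separable packing are `2ε` apart, because the separating hyperplane
keeps both of them at distance `ε`. A packing is therefore a `2ε`-separated subset of the unit
ball, and its size is bounded by an `ε/2`-covering number of the ball; this is what makes the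
`sSup` defining `TSNumberB` a genuine maximum.

For the lower bound take `M = 2⌊1/(2ε√d)⌋` and the `M^d` centres of the cells of side `2ε`
tiling the cube `[-Mε, Mε]^d`, whose half-diagonal `Mε√d` is at most `1`. Two centres that differ
in coordinate `j` are separated by the coordinate hyperplane through a cell wall between them, and
every centre's `j`-th coordinate differs from every wall by an odd multiple of `ε`.
-/

open Finset Metric

lemma EuclideanSpace.norm_le_sqrt_card_mul {ι : Type*} [Fintype ι] {x : EuclideanSpace ℝ ι}
    {C : ℝ} (hC : 0 ≤ C) (hx : ∀ i, |x i| ≤ C) : ‖x‖ ≤ √(Fintype.card ι) * C := by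
  calc ‖x‖ = √(∑ i, ‖x i‖ ^ 2) := EuclideanSpace.norm_eq x
    _ ≤ √(∑ _ : ι, C ^ 2) := by
      gcongr with i
      exact (Real.norm_eq_abs _).trans_le (hx i)
    _ = √(Fintype.card ι) * C := by
      rw [sum_const, card_univ, nsmul_eq_mul, Real.sqrt_mul (Nat.cast_nonneg _), Real.sqrt_sq hC]

lemma le_abs_two_mul_sub_one_mul (n : ℤ) {ε : ℝ} (hε : 0 ≤ ε) : ε ≤ |(2 * n - 1) * ε| := by
  have hodd : (1 : ℝ) ≤ |2 * (n : ℝ) - 1| := by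
    exact_mod_cast Int.one_le_abs (show 2 * n - 1 ≠ 0 by omega)
  rw [abs_mul, abs_of_nonneg hε]
  exact le_mul_of_one_le_left hε hodd

lemma Nat.floor_one_div_mul_le_one {x : ℝ} (hx : 0 ≤ x) : ⌊1 / x⌋₊ * x ≤ 1 := by
  rcases hx.eq_or_lt with rfl | hx
  · simp
  · calc ⌊1 / x⌋₊ * x ≤ 1 / x * x := by gcongr; exact Nat.floor_le (by positivity)
      _ = 1 := one_div_mul_cancel hx.ne'

lemma two_mul_le_abs_sub_of_opposite_signs {a b ε : ℝ} (hab : 0 ≤ a ↔ ¬ 0 ≤ b)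
    (ha : ε ≤ |a|) (hb : ε ≤ |b|) : 2 * ε ≤ |a - b| := by
  grind [abs_of_nonneg, abs_of_neg, le_abs]

section Separation

variable {d : ℕ} {ε : ℝ} {P : Finset (EuclideanSpace ℝ (Fin d))}

lemma IsTSPackingB.two_mul_le_dist (hP : IsTSPackingB d ε P) {x y : EuclideanSpace ℝ (Fin d)}
    (hx : x ∈ P) (hy : y ∈ P) (hxy : x ≠ y) : 2 * ε ≤ dist x y := by
  obtain ⟨w, b, hw, hsign, hmargin⟩ := hP.2 x hx y hy hxy
  calc 2 * ε ≤ |(⟪w, x⟫ + b) - (⟪w, y⟫ + b)| :=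
        two_mul_le_abs_sub_of_opposite_signs hsign (hmargin x hx) (hmargin y hy)
    _ = |⟪w, x - y⟫| := by rw [inner_sub_right, add_sub_add_right_eq_sub]
    _ ≤ ‖w‖ * ‖x - y‖ := abs_real_inner_le_norm w (x - y)
    _ = dist x y := by rw [hw, one_mul, dist_eq_norm]

lemma bddAbove_card_isTSPackingB (hε : 0 < ε) :
    BddAbove {n | ∃ P, IsTSPackingB d ε P ∧ P.card = n} := by
  set δ : NNReal := ⟨ε / 2, by positivity⟩
  obtain ⟨N, -, hNfin, hN⟩ := exists_finite_isCover_of_isCompact (ε := δ)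
    (ne_of_gt (show (0 : ℝ) < ε / 2 by positivity))
    (isCompact_closedBall (0 : EuclideanSpace ℝ (Fin d)) 1)
  refine ⟨hNfin.toFinset.card, ?_⟩
  rintro _ ⟨P, hP, rfl⟩
  have hsep : IsSeparated (2 * δ : NNReal) (P : Set (EuclideanSpace ℝ (Fin d))) := by
    intro x hx y hy hxy
    rw [edist_dist, ENNReal.coe_lt_ofReal]
    have := hP.two_mul_le_dist hx hy hxy
    change 2 * (ε / 2) < dist x y
    linarith
  have hsub : (P : Set (EuclideanSpace ℝ (Fin d))) ⊆ closedBall 0 1 := fun x hx =>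
    mem_closedBall_zero_iff.mpr (hP.1 x hx)
  have hcard : (P : Set (EuclideanSpace ℝ (Fin d))).encard ≤ N.encard :=
    calc _ ≤ packingNumber (2 * δ) (closedBall (0 : EuclideanSpace ℝ (Fin d)) 1) :=
          hsep.encard_le_packingNumber hsub
      _ ≤ externalCoveringNumber δ (closedBall 0 1) :=
          packingNumber_two_mul_le_externalCoveringNumber _ _
      _ ≤ N.encard := hN.externalCoveringNumber_le_encard
  rwa [Set.encard_coe_eq_coe_finsetCard, hNfin.encard_eq_coe_toFinset_card, Nat.cast_le] at hcard

end Separation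

section Grid

variable {d M : ℕ} {ε : ℝ}

/-- The centre of cell `k` when the cube `[-Mε, Mε]^d` is cut into `M^d` cells of side `2ε`. -/
def gridPoint (M : ℕ) (ε : ℝ) (k : Fin d → Fin M) : EuclideanSpace ℝ (Fin d) :=
  WithLp.toLp 2 fun i => (2 * (k i : ℝ) + 1 - M) * ε

@[simp]
lemma gridPoint_apply (k : Fin d → Fin M) (i : Fin d) :
    gridPoint M ε k i = (2 * (k i : ℝ) + 1 - M) * ε := rfl

lemma gridPoint_injective (hε : ε ≠ 0) : Function.Injective (gridPoint (d := d) M ε) := by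
  intro k k' h
  funext i
  have := congrArg (· i) h
  simp only [gridPoint_apply, mul_left_inj' hε, sub_left_inj, add_left_inj, mul_eq_mul_left_iff,
    Nat.cast_inj, Fin.val_inj] at this
  simpa using this

lemma norm_gridPoint_le (hε : 0 ≤ ε) (k : Fin d → Fin M) :
    ‖gridPoint M ε k‖ ≤ M * ε * √d := by
  have hcoord (i : Fin d) : |gridPoint M ε k i| ≤ M * ε := by
    have hk : (k i : ℝ) + 1 ≤ M := by exact_mod_cast (k i).isLt
    rw [gridPoint_apply, abs_mul, abs_of_nonneg hε]
    gcongr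
    exact abs_le.mpr ⟨by linarith [(k i : ℕ).cast_nonneg (α := ℝ)], by linarith⟩
  simpa [mul_comm] using EuclideanSpace.norm_le_sqrt_card_mul (by positivity) hcoord

/-- `(2a + 2 - M) ε` is the coordinate of the wall between the layers `a` and `a + 1` of cells. -/
lemma le_abs_gridPoint_apply_sub_wall (hε : 0 ≤ ε) (k : Fin d → Fin M) (j : Fin d) (a : ℕ) :
    ε ≤ |gridPoint M ε k j - (2 * a + 2 - M) * ε| := by
  have h := le_abs_two_mul_sub_one_mul ((k j : ℤ) - a) hε
  push_cast at h
  convert h using 2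
  simp only [gridPoint_apply]
  ring

lemma exists_wall_separating_gridPoint (hε : 0 < ε) {k k' : Fin d → Fin M} {j : Fin d}
    (hj : k j < k' j) :
    ∃ (w : EuclideanSpace ℝ (Fin d)) (b : ℝ), ‖w‖ = 1 ∧
      ⟪w, gridPoint M ε k⟫ + b < 0 ∧ 0 < ⟪w, gridPoint M ε k'⟫ + b ∧
      ∀ k'', ε ≤ |⟪w, gridPoint M ε k''⟫ + b| := by
  have hj' : (k j : ℝ) + 1 ≤ k' j := by exact_mod_cast hj
  refine ⟨EuclideanSpace.single j 1, -((2 * (k j : ℕ) + 2 - M) * ε), by simp, ?_, ?_, ?_⟩ <;>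
    simp only [EuclideanSpace.inner_single_left, map_one, one_mul, ← sub_eq_add_neg]
  · simp only [gridPoint_apply]
    nlinarith
  · simp only [gridPoint_apply]
    nlinarith
  · exact fun k'' => le_abs_gridPoint_apply_sub_wall hε.le k'' j _

theorem isTSPackingB_image_gridPoint (hε : 0 < ε) (hM : M * ε * √d ≤ 1) :
    IsTSPackingB d ε (univ.image (gridPoint M ε)) := by
  refine ⟨?_, ?_⟩
  · simp only [mem_image, mem_univ, true_and, forall_exists_index, forall_apply_eq_imp_iff]
    exact fun k => (norm_gridPoint_le hε.le k).trans hM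
  · simp only [mem_image, mem_univ, true_and, forall_exists_index, forall_apply_eq_imp_iff]
    intro k k' hne
    obtain ⟨j, hj⟩ := Function.ne_iff.mp (ne_of_apply_ne _ hne)
    rcases lt_or_gt_of_ne hj with hlt | hgt
    · obtain ⟨w, b, hw, hk, hk', hmargin⟩ := exists_wall_separating_gridPoint hε hlt
      exact ⟨w, b, hw, by simp [hk.not_ge, hk'.le], hmargin⟩
    · obtain ⟨w, b, hw, hk', hk, hmargin⟩ := exists_wall_separating_gridPoint hε hgt
      exact ⟨w, b, hw, by simp [hk.le, hk'.not_ge], hmargin⟩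

end Grid

theorem TS_grid_lower_bound_general (d : ℕ) (ε : ℝ) (hε : 0 < ε) :
    (2 * ⌊1 / (2 * ε * Real.sqrt d)⌋₊) ^ d ≤ TSNumberB d ε := by
  set M := 2 * ⌊1 / (2 * ε * Real.sqrt d)⌋₊
  have hM : M * ε * √d ≤ 1 := by
    have := Nat.floor_one_div_mul_le_one (show 0 ≤ 2 * ε * √d by positivity)
    simp only [M, Nat.cast_mul, Nat.cast_ofNat]
    linarith
  calc M ^ d = (univ.image (gridPoint M ε)).card := by
        rw [card_image_of_injective _ (gridPoint_injective hε.ne')]; simp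
    _ ≤ TSNumberB d ε :=
        le_csSup (bddAbove_card_isTSPackingB hε) ⟨_, isTSPackingB_image_gridPoint hε hM, rfl⟩

/-- Grid lower bound: `TS(d, ε) ≥ (2⌊1/(2ε√d)⌋)^d` for `ε ≤ 1/(2√d)`. -/
theorem TS_grid_lower_bound (d : ℕ) (hd : 1 ≤ d) (ε : ℝ) (hε : 0 < ε)
    (hεd : ε ≤ 1 / (2 * Real.sqrt d)) :
    (2 * ⌊1 / (2 * ε * Real.sqrt d)⌋₊) ^ d ≤ TSNumberB d ε :=
  TS_grid_lower_bound_general d ε hε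
end
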